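/- arXiv:1204.2338 — 2 statements merged into one kernel-verified Lean document; each statement's English description precedes it below -/
import Mathlib

section
/- Let k be a field of prime characteristic p, let S = k[x_1,…,x_N] be the standard graded polynomial ring, and let f_1,…,f_t be a regular sequence of homogeneous polynomials of positive degree in S. Set R = S/(f_1,…,f_t) with homogeneous maximal ideal m (the image of (x_1,…,x_N)). For q = p^e define ν(q) = max{ r ∈ ℕ : m^r ⊄ m^{[q]} }. Then the limit c(R) = lim_{e→∞} ν(p^e)/p^e exists and satisfies c(R) ≥ N − (deg f_1 + ⋯ + deg f_t); that is, c(R) ≥ −a(R), where a(R) = Σ_i deg f_i − N is the a-invariant of R. -/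
set_option synthInstance.maxHeartbeats 1000000
set_option maxHeartbeats 1000000

open MvPolynomial

/-- The `q`-th Frobenius power of an ideal: the ideal generated by the `q`-th powers of
its elements. -/
noncomputable def frobPow {R : Type*} [CommRing R] (I : Ideal R) (q : ℕ) : Ideal R :=
  Ideal.span ((fun a => a ^ q) '' (I : Set R))

/-- `nu m J = max { r ∈ ℕ : m^r ⊄ J }`, the top socle degree of `R/J`. -/
noncomputable def nu {R : Type*} [CommRing R] (m J : Ideal R) : ℕ :=
  sSup {r : ℕ | ¬ m ^ r ≤ J}

/-!
Write `m = (x_1, …, x_N)` and `I = (f_1, …, f_t)` in `S = k[x_1, …, x_N]`. Pulled back to `S`,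
`ν(q)` is the largest `r` with `m^r ⊄ (x_1^q, …, x_N^q) + I`. Splitting a monomial of degree
`p r + N (p - 1)` as `x^ρ (x^β)^p` with all `ρ_i < p` gives `ν(pq) + 1 ≤ p (ν(q) + 1) + N (p - 1)`,
so `(ν(p^e) + 1 + N) / p^e` decreases and `ν(p^e) / p^e` converges.

For the bound, with `q = p^e`, choose exponents `a_i < q` with `∑ a_i` maximal such that
`h = ∏ f_i ^ a_i ∉ (x_i^q)`; then `h I ⊆ (x_i^q)` and `deg h ≤ (q - 1) ∑ deg f_i`. A monomial `x^γ`
of `h` with all `γ_i < q` has the complement `x^β`, `β_i = q - 1 - γ_i`, of degree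
`≥ (N - ∑ deg f_i)(q - 1)`, and `x^β ∉ (x_i^q) + I` because `h x^β` involves
`x_1^{q-1} ⋯ x_N^{q-1}`.
-/

open Filter Topology

section Nu

variable {R : Type*} [CommRing R] {m I : Ideal R}

theorem bddAbove_of_pow_le {n : ℕ} (h : m ^ n ≤ I) : BddAbove {r | ¬ m ^ r ≤ I} :=
  ⟨n, fun r hr => by
    by_contra hlt
    exact hr ((Ideal.pow_le_pow_right (not_le.1 hlt).le).trans h)⟩

theorem le_nu (hb : BddAbove {r | ¬ m ^ r ≤ I}) {r : ℕ} (hr : ¬ m ^ r ≤ I) : r ≤ nu m I :=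
  le_csSup hb hr

theorem pow_nu_succ_le (hb : BddAbove {r | ¬ m ^ r ≤ I}) : m ^ (nu m I + 1) ≤ I := by
  by_contra h
  exact (le_nu hb h).not_gt (Nat.lt_succ_self _)

theorem nu_lt_of_pow_le {n : ℕ} (hn : 0 < n) (h : m ^ n ≤ I) : nu m I < n := by
  have : nu m I ≤ n - 1 := csSup_le' fun r hr => by
    by_contra hlt
    exact hr ((Ideal.pow_le_pow_right (by omega)).trans h)
  omega

theorem nu_map_mk (C I J : Ideal R) :
    nu (I.map (Ideal.Quotient.mk C)) (J.map (Ideal.Quotient.mk C)) = nu I (J ⊔ C) := by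
  simp only [nu, ← Ideal.map_pow, Ideal.map_le_iff_le_comap,
    Ideal.comap_map_of_surjective' _ Ideal.Quotient.mk_surjective, Ideal.mk_ker]

end Nu

section FrobPow

variable {R : Type*} [CommRing R]

theorem frobPow_mono {I J : Ideal R} (h : I ≤ J) (q : ℕ) : frobPow I q ≤ frobPow J q :=
  Ideal.span_mono (Set.image_mono h)

theorem frobPow_le_self (I : Ideal R) {q : ℕ} (hq : 0 < q) : frobPow I q ≤ I :=
  Ideal.span_le.2 <| by
    rintro _ ⟨a, ha, rfl⟩
    exact I.pow_mem_of_mem ha q hq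

theorem frobPow_map_of_surjective {S : Type*} [CommRing S] {f : R →+* S}
    (hf : Function.Surjective f) (I : Ideal R) (q : ℕ) :
    frobPow (I.map f) q = (frobPow I q).map f := by
  have : ((I.map f : Ideal S) : Set S) = f '' I :=
    Set.ext fun _ => Ideal.mem_map_iff_of_surjective f hf
  simp only [frobPow, Ideal.map_span, this, Set.image_image, map_pow]

variable (p : ℕ) [ExpChar R p]

theorem frobPow_eq_map_iterateFrobenius (I : Ideal R) (e : ℕ) :
    frobPow I (p ^ e) = I.map (iterateFrobenius R p e) := by
  simp only [frobPow, Ideal.map]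
  congr 1

theorem frobPow_sup (I J : Ideal R) (e : ℕ) :
    frobPow (I ⊔ J) (p ^ e) = frobPow I (p ^ e) ⊔ frobPow J (p ^ e) := by
  simp only [frobPow_eq_map_iterateFrobenius, Ideal.map_sup]

theorem frobPow_span (s : Set R) (e : ℕ) :
    frobPow (Ideal.span s) (p ^ e) = Ideal.span ((· ^ p ^ e) '' s) := by
  rw [frobPow_eq_map_iterateFrobenius, Ideal.map_span]
  congr 1

end FrobPow

section ProdPow

variable {R ι : Type*} [CommSemiring R] [Fintype ι] {J : Ideal R} {q : ℕ} {f : ι → R}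

theorem Ideal.prod_pow_mem_of_pow_mem {a : ι → ℕ} {i : ι} (hf : f i ^ q ∈ J) (h : q ≤ a i) :
    ∏ j, f j ^ a j ∈ J :=
  J.mem_of_dvd ((pow_dvd_pow _ h).trans (Finset.dvd_prod_of_mem _ (Finset.mem_univ i))) hf

theorem Ideal.exists_prod_pow_notMem_mul_mem (hJ : J ≠ ⊤) (hf : ∀ i, f i ^ q ∈ J) :
    ∃ a : ι → ℕ, (∀ i, a i < q) ∧ ∏ i, f i ^ a i ∉ J ∧ ∀ i, (∏ j, f j ^ a j) * f i ∈ J := by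
  classical
  set S := (Fintype.piFinset fun _ : ι => Finset.range q).filter fun a => ∏ i, f i ^ a i ∉ J
  have hS : ∀ a : ι → ℕ, ∏ i, f i ^ a i ∉ J → a ∈ S := fun a ha => by
    simp only [S, Finset.mem_filter, Fintype.mem_piFinset, Finset.mem_range]
    exact ⟨fun i => not_le.1 fun hi => ha (prod_pow_mem_of_pow_mem (hf i) hi), ha⟩
  obtain ⟨a, haS, hmax⟩ := S.exists_max_image (fun a => ∑ i, a i)
    ⟨0, hS 0 (by simpa using (Ideal.ne_top_iff_one J).1 hJ)⟩
  simp only [S, Finset.mem_filter, Fintype.mem_piFinset, Finset.mem_range] at haS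
  refine ⟨a, haS.1, haS.2, fun i => ?_⟩
  by_contra hi
  set b : ι → ℕ := a + Pi.single i 1
  have hprod : ∏ j, f j ^ b j = (∏ j, f j ^ a j) * f i := by
    simp only [b, Pi.add_apply, pow_add, Finset.prod_mul_distrib]
    simp [Pi.single_apply, apply_ite]
  have := hmax b (hS b (hprod ▸ hi))
  simp [b, Finset.sum_add_distrib] at this

end ProdPow

theorem Finsupp.exists_eq_nsmul_add_le_degree {σ : Type*} [Fintype σ] {n r : ℕ} (hn : 0 < n)
    {α : σ →₀ ℕ} (hα : n * r + Fintype.card σ * (n - 1) ≤ α.degree) :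
    ∃ β ρ : σ →₀ ℕ, α = n • β + ρ ∧ r ≤ β.degree := by
  set β := α.mapRange (· / n) (Nat.zero_div n)
  set ρ := α.mapRange (· % n) (Nat.zero_mod n)
  have hsplit : α = n • β + ρ := by
    ext i
    simp [β, ρ, Nat.div_add_mod]
  have hρ : ρ.degree ≤ Fintype.card σ * (n - 1) := by
    rw [Finsupp.degree_eq_sum]
    calc ∑ i, ρ i ≤ ∑ _i : σ, (n - 1) := Finset.sum_le_sum fun i _ => by
          have := Nat.mod_lt (α i) hn
          simp only [ρ, Finsupp.mapRange_apply]
          omega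
      _ = Fintype.card σ * (n - 1) := by simp
  have hdeg : α.degree = n * β.degree + ρ.degree := by
    conv_lhs => rw [hsplit]
    simp
  refine ⟨β, ρ, hsplit, Nat.le_of_mul_le_mul_left ?_ hn⟩
  omega

section DivPow

variable {u : ℕ → ℝ} {b : ℝ}

theorem exists_tendsto_div_pow_of_le_mul {a : ℝ} (hb : 1 < b) (h0 : ∀ e, 0 ≤ u e + a)
    (hrec : ∀ e, u (e + 1) + a ≤ b * (u e + a)) :
    ∃ L, Tendsto (fun e => u e / b ^ e) atTop (𝓝 L) := by
  have hpow : ∀ e, 0 < b ^ e := fun e => pow_pos (zero_lt_one.trans hb) e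
  have hanti : Antitone fun e => (u e + a) / b ^ e := antitone_nat_of_succ_le fun e => by
    rw [pow_succ', ← div_div, div_le_div_iff_of_pos_right (hpow e),
      div_le_iff₀ (zero_lt_one.trans hb), mul_comm]
    exact hrec e
  have hbdd : BddBelow (Set.range fun e => (u e + a) / b ^ e) :=
    ⟨0, by rintro _ ⟨e, rfl⟩; exact div_nonneg (h0 e) (hpow e).le⟩
  have hsmall : Tendsto (fun e => a / b ^ e) atTop (𝓝 0) :=
    tendsto_const_nhds.div_atTop (tendsto_pow_atTop_atTop_of_one_lt hb)
  refine ⟨_, by simpa [← sub_div] using (tendsto_atTop_ciInf hanti hbdd).sub hsmall⟩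

theorem le_of_tendsto_div_pow {c L : ℝ} (hb : 1 < b)
    (hu : Tendsto (fun e => u e / b ^ e) atTop (𝓝 L)) (hle : ∀ e, c * (b ^ e - 1) ≤ u e) :
    c ≤ L := by
  have hc : Tendsto (fun e => c - c / b ^ e) atTop (𝓝 c) := by
    simpa using tendsto_const_nhds.sub
      (tendsto_const_nhds.div_atTop (tendsto_pow_atTop_atTop_of_one_lt hb))
  refine le_of_tendsto_of_tendsto' hc hu fun e => ?_
  have hpos : 0 < b ^ e := pow_pos (zero_lt_one.trans hb) e
  rw [le_div_iff₀ hpos, sub_mul, div_mul_cancel₀ _ hpos.ne']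
  linarith [hle e]

end DivPow

namespace MvPolynomial

/-- `(x_i ^ q)_i`, which is `m^{[q]}` when `q` is a power of the characteristic. -/
noncomputable def idealOfVarPows (σ R : Type*) [CommSemiring R] (q : ℕ) :
    Ideal (MvPolynomial σ R) :=
  Ideal.span (Set.range fun i => X i ^ q)

variable {σ R : Type*}

section CommSemiring

variable [CommSemiring R] {q : ℕ}

theorem mem_idealOfVarPows_iff {g : MvPolynomial σ R} :
    g ∈ idealOfVarPows σ R q ↔ ∀ α ∈ g.support, ∃ i, q ≤ α i := by
  have : (Set.range fun i => (X i : MvPolynomial σ R) ^ q) =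
      (monomial · 1) '' Set.range fun i => Finsupp.single i q := by
    simp only [← Set.range_comp, Function.comp_def, X_pow_eq_monomial]
  simp [idealOfVarPows, this, mem_ideal_span_monomial_image]

theorem monomial_mem_idealOfVarPows {α : σ →₀ ℕ} {i : σ} (h : q ≤ α i) (c : R) :
    monomial α c ∈ idealOfVarPows σ R q :=
  mem_idealOfVarPows_iff.2 fun _ hβ =>
    ⟨i, by rwa [Finset.mem_singleton.1 (support_monomial_subset hβ)]⟩

theorem monomial_mem_pow_idealOfVars {n : ℕ} {α : σ →₀ ℕ} (h : n ≤ α.degree) (c : R) :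
    monomial α c ∈ idealOfVars σ R ^ n :=
  (mem_pow_idealOfVars_iff n _).2 fun _ hβ => by
    rwa [Finset.mem_singleton.1 (support_monomial_subset hβ)]

theorem one_notMem_idealOfVarPows [Nontrivial R] (hq : 0 < q) :
    (1 : MvPolynomial σ R) ∉ idealOfVarPows σ R q := by
  intro h
  obtain ⟨i, hi⟩ := mem_idealOfVarPows_iff.1 h 0 (by simp)
  exact hq.not_ge hi

theorem pow_idealOfVars_le_idealOfVarPows [Fintype σ] :
    idealOfVars σ R ^ (Fintype.card σ * (q - 1) + 1) ≤ idealOfVarPows σ R q := by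
  rw [pow_idealOfVars_eq_span, Ideal.span_le]
  rintro _ ⟨α, hα, rfl⟩
  have hlt : ∑ _i : σ, (q - 1) < ∑ i, α i := by
    simp only [Set.mem_preimage, Set.mem_singleton_iff, Finsupp.degree_eq_sum] at hα
    simp [hα]
  obtain ⟨i, -, hi⟩ := Finset.exists_lt_of_sum_lt hlt
  exact monomial_mem_idealOfVarPows (i := i) (by omega) 1

theorem idealOfVarPows_one : idealOfVarPows σ R 1 = idealOfVars σ R := by
  simp [idealOfVarPows, idealOfVars]

theorem IsHomogeneous.mem_idealOfVars {φ : MvPolynomial σ R} {n : ℕ} (hφ : φ.IsHomogeneous n)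
    (hn : 0 < n) : φ ∈ idealOfVars σ R := by
  rw [← pow_one (idealOfVars σ R), mem_pow_idealOfVars_iff]
  intro α hα
  by_contra! hlt
  exact mem_support_iff.1 hα (hφ.coeff_eq_zero (by omega))

end CommSemiring

variable [CommRing R]

theorem pow_idealOfVars_le_frobPow_pow [Fintype σ] {n : ℕ} (hn : 0 < n) (r : ℕ) :
    idealOfVars σ R ^ (n * r + Fintype.card σ * (n - 1)) ≤ frobPow (idealOfVars σ R ^ r) n := by
  rw [pow_idealOfVars_eq_span, Ideal.span_le]
  rintro _ ⟨α, hα, rfl⟩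
  obtain ⟨β, ρ, rfl, hβ⟩ := Finsupp.exists_eq_nsmul_add_le_degree hn (le_of_eq hα.symm)
  have : monomial (n • β + ρ) (1 : R) = monomial ρ 1 * monomial β 1 ^ n := by
    rw [monomial_pow, monomial_mul, one_pow, mul_one, add_comm]
  simp only [SetLike.mem_coe, this]
  exact Ideal.mul_mem_left _ _ (Ideal.subset_span ⟨_, monomial_mem_pow_idealOfVars hβ 1, rfl⟩)

theorem not_pow_idealOfVars_le_sup [Fintype σ] {q : ℕ} {h : MvPolynomial σ R}
    (hh : h ∉ idealOfVarPows σ R q) {C : Ideal (MvPolynomial σ R)}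
    (hC : C ≤ (idealOfVarPows σ R q).colon {h}) :
    ¬ idealOfVars σ R ^ (Fintype.card σ * (q - 1) - h.totalDegree) ≤
      idealOfVarPows σ R q ⊔ C := by
  intro hle
  obtain ⟨γ, hγ, hγq⟩ : ∃ γ ∈ h.support, ∀ i, γ i < q := by
    by_contra! H
    exact hh (mem_idealOfVarPows_iff.2 H)
  set β : σ →₀ ℕ := Finsupp.equivFunOnFinite.symm fun i => q - 1 - γ i
  have hcorner : ∀ i, (γ + β) i = q - 1 := fun i => by
    have hβi : β i = q - 1 - γ i := rfl
    have := hγq i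
    rw [Finsupp.add_apply]
    omega
  have hβdeg : Fintype.card σ * (q - 1) - h.totalDegree ≤ β.degree := by
    have hγdeg : γ.degree ≤ h.totalDegree := le_totalDegree hγ
    have : γ.degree + β.degree = Fintype.card σ * (q - 1) := by
      rw [← map_add, Finsupp.degree_eq_sum]
      simp [hcorner]
    omega
  have hβ : monomial β (1 : R) ∈ idealOfVarPows σ R q ⊔ C :=
    hle <| monomial_mem_pow_idealOfVars hβdeg 1
  have hmul : h * monomial β 1 ∈ idealOfVarPows σ R q := by
    simpa [mul_comm] using Submodule.mem_colon_singleton.1 (sup_le Ideal.le_colon hC hβ)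
  obtain ⟨i, hi⟩ := mem_idealOfVarPows_iff.1 hmul (γ + β) (by
    rw [mem_support_iff, coeff_mul_monomial, mul_one]
    exact mem_support_iff.1 hγ)
  have := hγq i
  rw [hcorner] at hi
  omega

theorem bddAbove_not_pow_idealOfVars_le [Fintype σ] (q : ℕ) (C : Ideal (MvPolynomial σ R)) :
    BddAbove {r | ¬ idealOfVars σ R ^ r ≤ idealOfVarPows σ R q ⊔ C} :=
  bddAbove_of_pow_le (le_sup_of_le_left pow_idealOfVars_le_idealOfVarPows)

section CharP

variable (p : ℕ) [ExpChar R p]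

theorem frobPow_idealOfVarPows (q e : ℕ) :
    frobPow (idealOfVarPows σ R q) (p ^ e) = idealOfVarPows σ R (q * p ^ e) := by
  simp only [idealOfVarPows, frobPow_span, ← Set.range_comp, Function.comp_def, ← pow_mul]

theorem frobPow_idealOfVars (e : ℕ) :
    frobPow (idealOfVars σ R) (p ^ e) = idealOfVarPows σ R (p ^ e) := by
  rw [← idealOfVarPows_one, frobPow_idealOfVarPows, one_mul]

theorem nu_idealOfVarPows_mul_lt [Fintype σ] (q : ℕ) (C : Ideal (MvPolynomial σ R)) :
    nu (idealOfVars σ R) (idealOfVarPows σ R (q * p) ⊔ C) <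
      p * (nu (idealOfVars σ R) (idealOfVarPows σ R q ⊔ C) + 1) + Fintype.card σ * (p - 1) := by
  have hp := expChar_pos R p
  refine nu_lt_of_pow_le (by positivity) ?_
  calc _ ≤ frobPow (idealOfVars σ R ^ (nu (idealOfVars σ R) (idealOfVarPows σ R q ⊔ C) + 1)) p :=
        pow_idealOfVars_le_frobPow_pow hp _
    _ ≤ frobPow (idealOfVarPows σ R q ⊔ C) (p ^ 1) := by
        rw [pow_one]
        exact frobPow_mono (pow_nu_succ_le (bddAbove_not_pow_idealOfVars_le q C)) p
    _ ≤ idealOfVarPows σ R (q * p) ⊔ C := by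
        rw [frobPow_sup, frobPow_idealOfVarPows, pow_one]
        exact sup_le_sup_left (frobPow_le_self C hp) _

theorem card_mul_le_nu_add_mul_sum_totalDegree [Nontrivial R] [Fintype σ] {ι : Type*} [Fintype ι]
    (f : ι → MvPolynomial σ R)
    (hf : ∀ i, f i ∈ idealOfVars σ R) (e : ℕ) :
    Fintype.card σ * (p ^ e - 1) ≤
      nu (idealOfVars σ R) (idealOfVarPows σ R (p ^ e) ⊔ Ideal.span (Set.range f)) +
        (p ^ e - 1) * ∑ i, (f i).totalDegree := by
  have hq : 0 < p ^ e := pow_pos (expChar_pos R p) e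
  have hfq : ∀ i, f i ^ p ^ e ∈ idealOfVarPows σ R (p ^ e) := fun i => by
    rw [← frobPow_idealOfVars p]
    exact Ideal.subset_span ⟨f i, hf i, rfl⟩
  obtain ⟨a, ha, hnot, hmul⟩ := Ideal.exists_prod_pow_notMem_mul_mem
    ((Ideal.ne_top_iff_one _).2 (one_notMem_idealOfVarPows hq)) hfq
  have hdeg : (∏ i, f i ^ a i).totalDegree ≤ (p ^ e - 1) * ∑ i, (f i).totalDegree := by
    rw [Finset.mul_sum]
    refine (totalDegree_finsetProd _ _).trans (Finset.sum_le_sum fun i _ => ?_)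
    exact (totalDegree_pow _ _).trans (Nat.mul_le_mul_right _ (by have := ha i; omega))
  have hC : Ideal.span (Set.range f) ≤ (idealOfVarPows σ R (p ^ e)).colon {∏ i, f i ^ a i} := by
    rw [Ideal.span_le]
    rintro _ ⟨i, rfl⟩
    rw [SetLike.mem_coe, Submodule.mem_colon_singleton, smul_eq_mul, mul_comm]
    exact hmul i
  have := le_nu (bddAbove_not_pow_idealOfVars_le _ _) (not_pow_idealOfVars_le_sup hnot hC)
  omega

end CharP

end MvPolynomial

theorem diagonalFThreshold_ge_neg_aInvariant_general
    (p : ℕ) (hp : p.Prime) (k : Type*) [Field k] [CharP k p]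
    (N t : ℕ) (f : Fin t → MvPolynomial (Fin N) k) (df : Fin t → ℕ)
    (hdfpos : ∀ i, 0 < df i)
    (hfhom : ∀ i, (f i).IsHomogeneous (df i))
    (C : Ideal (MvPolynomial (Fin N) k)) (hC : C = Ideal.span (Set.range f)) :
    ∃ c : ℝ,
      Filter.Tendsto
        (fun e : ℕ =>
          (nu ((Ideal.span (Set.range (X : Fin N → MvPolynomial (Fin N) k))).map
                (Ideal.Quotient.mk C))
              (frobPow
                ((Ideal.span (Set.range (X : Fin N → MvPolynomial (Fin N) k))).map
                  (Ideal.Quotient.mk C))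
                (p ^ e)) : ℝ) / (p ^ e : ℝ))
        Filter.atTop (nhds c) ∧
      (N : ℝ) - ∑ i : Fin t, (df i : ℝ) ≤ c := by
  have : Fact p.Prime := ⟨hp⟩
  set ν : ℕ → ℕ := fun e => nu (idealOfVars (Fin N) k) (idealOfVarPows (Fin N) k (p ^ e) ⊔ C)
  have hν : ∀ e, nu ((idealOfVars (Fin N) k).map (Ideal.Quotient.mk C))
      (frobPow ((idealOfVars (Fin N) k).map (Ideal.Quotient.mk C)) (p ^ e)) = ν e := fun e => by
    rw [frobPow_map_of_surjective Ideal.Quotient.mk_surjective, frobPow_idealOfVars, nu_map_mk]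
  have hrec : ∀ e, (ν (e + 1) : ℝ) + (N + 1) ≤ p * (ν e + (N + 1)) := fun e => by
    have h := nu_idealOfVarPows_mul_lt p (p ^ e) C
    rw [← pow_succ, Fintype.card_fin] at h
    have h' : ((ν (e + 1) + 1 : ℕ) : ℝ) ≤ (p * (ν e + 1) + N * (p - 1) : ℕ) := by exact_mod_cast h
    push_cast [Nat.cast_sub hp.one_le] at h'
    linarith
  have hlow : ∀ e, ((N : ℝ) - ∑ i, (df i : ℝ)) * ((p : ℝ) ^ e - 1) ≤ ν e := fun e => by
    have h := card_mul_le_nu_add_mul_sum_totalDegree p f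
      (fun i => (hfhom i).mem_idealOfVars (hdfpos i)) e
    rw [Fintype.card_fin, ← hC] at h
    have hD : ∑ i, (f i).totalDegree ≤ ∑ i, df i :=
      Finset.sum_le_sum fun i _ => (hfhom i).totalDegree_le
    have h' : ((N * (p ^ e - 1) : ℕ) : ℝ) ≤ (ν e + (p ^ e - 1) * ∑ i, df i : ℕ) := by
      exact_mod_cast h.trans (Nat.add_le_add_left (Nat.mul_le_mul_left _ hD) _)
    push_cast [Nat.cast_sub (Nat.one_le_pow e p hp.pos)] at h'
    linarith
  have hp1 : (1 : ℝ) < p := by exact_mod_cast hp.one_lt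
  obtain ⟨c, hc⟩ := exists_tendsto_div_pow_of_le_mul (u := fun e => ν e) hp1
    (fun e => by positivity) hrec
  exact ⟨c, by simpa only [hν] using hc, le_of_tendsto_div_pow hp1 hc hlow⟩

/-- **The diagonal F-threshold of a graded complete intersection exists and is at least
`−a(R)`.**  For `R = k[x_1,…,x_N]/(f_1,…,f_t)` with the `f_i` a homogeneous regular
sequence of positive degrees, the limit `c(R) = lim ν(p^e)/p^e` (where
`ν(q) = max { r : m^r ⊄ m^{[q]} }`) exists and satisfies
`c(R) ≥ N − (deg f_1 + ⋯ + deg f_t) = −a(R)`. -/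
theorem diagonalFThreshold_ge_neg_aInvariant
    (p : ℕ) (hp : p.Prime) (k : Type*) [Field k] [CharP k p]
    (N t : ℕ) (f : Fin t → MvPolynomial (Fin N) k) (df : Fin t → ℕ)
    (hdfpos : ∀ i, 0 < df i)
    (hfhom : ∀ i, (f i).IsHomogeneous (df i))
    -- `f` is a regular sequence: each `f i` is a nonzerodivisor modulo its predecessors
    (hreg : ∀ (i : Fin t) (g : MvPolynomial (Fin N) k),
        g * f i ∈ Ideal.span (f '' {j | j < i}) → g ∈ Ideal.span (f '' {j | j < i}))
    (C : Ideal (MvPolynomial (Fin N) k)) (hC : C = Ideal.span (Set.range f)) :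
    ∃ c : ℝ,
      Filter.Tendsto
        (fun e : ℕ =>
          (nu ((Ideal.span (Set.range (X : Fin N → MvPolynomial (Fin N) k))).map
                (Ideal.Quotient.mk C))
              (frobPow
                ((Ideal.span (Set.range (X : Fin N → MvPolynomial (Fin N) k))).map
                  (Ideal.Quotient.mk C))
                (p ^ e)) : ℝ) / (p ^ e : ℝ))
        Filter.atTop (nhds c) ∧
      (N : ℝ) - ∑ i : Fin t, (df i : ℝ) ≤ c :=
  diagonalFThreshold_ge_neg_aInvariant_general p hp k N t f df hdfpos hfhom C hC
end

section
/- Let k be any field (of arbitrary characteristic), let n ≥ 1 and t ≥ 1 be integers, let A = k[x_0,…,x_n], and let Q = (x_0^t, x_1^t, …, x_n^t) ⊆ A. Suppose a_0,…,a_n ∈ A are homogeneous of common degree d with d < n(t−1), and suppose that for each i = 0,…,n there exists u_i ∈ A such that a_j x_i ≡ u_i x_j (mod Q) for all j = 0,…,n. Then there exists b ∈ A such that a_j ≡ b x_j (mod Q) for all j = 0,…,n. Equivalently: in the cokernel M of the map φ : A/Q → (A/Q)^{n+1} sending r to r·(x_0,…,x_n), every nonzero homogeneous socle element has degree at least n(t−1).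 -/
open MvPolynomial

lemma memQ_iff {k : Type*} [CommRing k] {σ : Type*} [Fintype σ] [DecidableEq σ] (t : ℕ)
    (p : MvPolynomial σ k) :
    p ∈ Ideal.span (Set.range fun l : σ => (X l : MvPolynomial σ k) ^ t) ↔
      ∀ μ : σ →₀ ℕ, (∀ l, μ l < t) → coeff μ p = 0 := by
  constructor
  · intro hp μ hμ
    rw [Ideal.mem_span_range_iff_exists_fun] at hp
    obtain ⟨c, rfl⟩ := hp
    rw [coeff_sum]
    refine Finset.sum_eq_zero fun l _ => ?_
    rw [X_pow_eq_monomial, coeff_mul_monomial', if_neg]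
    intro hle
    exact absurd (hμ l) (not_lt.2 (Finsupp.single_le_iff.1 hle))
  · intro h
    rw [← p.support_sum_monomial_coeff]
    refine Ideal.sum_mem _ fun μ hμ => ?_
    have h2 : ¬ ∀ l, μ l < t := fun hall => (mem_support_iff.1 hμ) (h μ hall)
    push_neg at h2
    obtain ⟨l, hl⟩ := h2
    have hle : Finsupp.single l t ≤ μ := Finsupp.single_le_iff.2 hl
    have heq : (monomial μ) (coeff μ p)
        = monomial (μ - Finsupp.single l t) (coeff μ p) * X l ^ t := by
      rw [X_pow_eq_monomial, monomial_mul, mul_one, tsub_add_cancel_of_le hle]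
    rw [heq]
    exact Ideal.mul_mem_left _ _ (Ideal.subset_span ⟨l, rfl⟩)

/-- **Socle degree bound for the cokernel of `r ↦ r·(x_0,…,x_n)` over
`k[x_0,…,x_n]/(x_0^t,…,x_n^t)`.**  Let `k` be any field, `n ≥ 1`, `t ≥ 1`,
`A = k[x_0,…,x_n]` and `Q = (x_0^t,…,x_n^t)`.  If `a_0,…,a_n` are homogeneous of common
degree `d < n(t−1)` and for each `i` there is `u_i` with `a_j x_i ≡ u_i x_j (mod Q)` for
all `j`, then there is `b` with `a_j ≡ b x_j (mod Q)` for all `j`; i.e. every nonzero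
homogeneous socle element of `coker(φ : A/Q → (A/Q)^{n+1})` has degree `≥ n(t−1)`. -/
theorem socle_degree_bound_cokernel
    (k : Type*) [Field k] (n t : ℕ) (hn : 1 ≤ n) (ht : 1 ≤ t)
    (d : ℕ) (hd : d < n * (t - 1))
    (a : Fin (n + 1) → MvPolynomial (Fin (n + 1)) k)
    (ha : ∀ j, (a j).IsHomogeneous d)
    (hu : ∀ i : Fin (n + 1), ∃ u : MvPolynomial (Fin (n + 1)) k,
        ∀ j : Fin (n + 1),
          a j * X i - u * X j ∈
            Ideal.span (Set.range fun l : Fin (n + 1) =>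
              (X l : MvPolynomial (Fin (n + 1)) k) ^ t)) :
    ∃ b : MvPolynomial (Fin (n + 1)) k, ∀ j : Fin (n + 1),
      a j - b * X j ∈
        Ideal.span (Set.range fun l : Fin (n + 1) =>
          (X l : MvPolynomial (Fin (n + 1)) k) ^ t) := by
  classical
  set Q : Ideal (MvPolynomial (Fin (n + 1)) k) :=
    Ideal.span (Set.range fun l : Fin (n + 1) =>
      (X l : MvPolynomial (Fin (n + 1)) k) ^ t) with hQ
  let e : Fin (n + 1) → (Fin (n + 1) →₀ ℕ) := fun i => Finsupp.single i 1
  have he : ∀ (i m : Fin (n + 1)) (ν : Fin (n + 1) →₀ ℕ),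
      (ν + e i) m = ν m + (if i = m then 1 else 0) := by
    intro i m ν
    simp [e, Finsupp.single_apply]
  -- congruence mod Q means equality of coefficients at reduced monomials
  have hcongr : ∀ p q : MvPolynomial (Fin (n + 1)) k, p - q ∈ Q →
      ∀ μ : Fin (n + 1) →₀ ℕ, (∀ m, μ m < t) → coeff μ p = coeff μ q := by
    intro p q hpq μ hμ
    have := (memQ_iff t (p - q)).1 hpq μ hμ
    rw [coeff_sub] at this
    exact sub_eq_zero.1 this
  have ht2 : 2 ≤ t := by
    rcases Nat.lt_or_ge t 2 with h | h
    · interval_cases t <;> simp_all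
    · exact h
  have hdeg_univ : ∀ μ : Fin (n + 1) →₀ ℕ, μ.degree = ∑ i : Fin (n + 1), μ i := by
    intro μ
    exact Finset.sum_subset (Finset.subset_univ _)
      (fun i _ hi => Finsupp.notMem_support_iff.1 hi)
  -- Step A: symmetry
  have stepA : ∀ (j l : Fin (n + 1)) (μ : Fin (n + 1) →₀ ℕ), (∀ m, μ m < t) →
      coeff μ (a j * X l) = coeff μ (a l * X j) := by
    intro j l μ hμ
    have hjl : (a j * X l).IsHomogeneous (d + 1) := (ha j).mul (isHomogeneous_X _ _)
    have hlj : (a l * X j).IsHomogeneous (d + 1) := (ha l).mul (isHomogeneous_X _ _)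
    by_cases hdeg : μ.degree = d + 1
    · have hex : ∃ i, μ i + 2 ≤ t := by
        by_contra hno
        push_neg at hno
        have hall : ∀ i : Fin (n + 1), t - 1 ≤ μ i := fun i => by have := hno i; omega
        have hge : (n + 1) * (t - 1) ≤ ∑ i : Fin (n + 1), μ i := by
          calc (n + 1) * (t - 1) = ∑ _i : Fin (n + 1), (t - 1) := by
                simp [Finset.sum_const, mul_comm]
            _ ≤ ∑ i : Fin (n + 1), μ i := Finset.sum_le_sum fun i _ => hall i
        rw [← hdeg_univ, hdeg] at hge
        have h1 : (n + 1) * (t - 1) = n * (t - 1) + (t - 1) := by ring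
        omega
      obtain ⟨i, hi⟩ := hex
      obtain ⟨u, hus⟩ := hu i
      have hred : ∀ m, (μ + e i) m < t := by
        intro m
        rw [he]
        have hm := hμ m
        rcases eq_or_ne i m with rfl | hmi
        · rw [if_pos rfl]; omega
        · rw [if_neg hmi]; omega
      have e1 : coeff μ (a j * X l)
          = coeff (μ + e i) (a j * X l * X i) := (coeff_mul_X _ _ _).symm
      have e2 : coeff μ (a l * X j)
          = coeff (μ + e i) (a l * X j * X i) := (coeff_mul_X _ _ _).symm
      rw [e1, e2]
      have m1 : a j * X l * X i - u * X j * X l ∈ Q := by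
        have hmem := Ideal.mul_mem_right (X l) _ (hus j)
        have heq : (a j * X i - u * X j) * X l = a j * X l * X i - u * X j * X l := by ring
        rwa [heq] at hmem
      have m2 : a l * X j * X i - u * X l * X j ∈ Q := by
        have hmem := Ideal.mul_mem_right (X j) _ (hus l)
        have heq : (a l * X i - u * X l) * X j = a l * X j * X i - u * X l * X j := by ring
        rwa [heq] at hmem
      rw [hcongr _ _ m1 _ hred, hcongr _ _ m2 _ hred]
      ring_nf
    · rw [hjl.coeff_eq_zero hdeg, hlj.coeff_eq_zero hdeg]
  -- Step 1: the reduced part of a j is divisible by x_j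
  have step1 : ∀ (j : Fin (n + 1)) (μ : Fin (n + 1) →₀ ℕ), (∀ m, μ m < t) → μ j = 0 →
      coeff μ (a j) = 0 := by
    intro j μ hμ hμj
    by_cases hdeg : μ.degree = d
    · have hex : ∃ i, i ≠ j ∧ μ i + 2 ≤ t := by
        by_contra hno
        push_neg at hno
        have hall : ∀ i ∈ Finset.univ.erase j, t - 1 ≤ μ i := by
          intro i hi
          have := hno i (Finset.ne_of_mem_erase hi)
          omega
        have hge : n * (t - 1) ≤ ∑ i ∈ Finset.univ.erase j, μ i := by
          calc n * (t - 1) = (Finset.univ.erase j).card * (t - 1) := by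
                rw [Finset.card_erase_of_mem (Finset.mem_univ _)]
                simp
            _ ≤ ∑ i ∈ Finset.univ.erase j, μ i := by
                rw [← smul_eq_mul]
                exact Finset.card_nsmul_le_sum _ _ _ hall
        have hle : ∑ i ∈ Finset.univ.erase j, μ i ≤ ∑ i : Fin (n + 1), μ i :=
          Finset.sum_le_sum_of_subset (Finset.erase_subset _ _)
        rw [← hdeg_univ, hdeg] at hle
        omega
      obtain ⟨i, hij, hi⟩ := hex
      obtain ⟨u, hus⟩ := hu i
      have hred : ∀ m, (μ + e i) m < t := by
        intro m
        rw [he]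
        have hm := hμ m
        rcases eq_or_ne i m with rfl | hmi
        · rw [if_pos rfl]; omega
        · rw [if_neg hmi]; omega
      have e1 : coeff μ (a j)
          = coeff (μ + e i) (a j * X i) := (coeff_mul_X _ _ _).symm
      rw [e1, hcongr _ _ (hus j) _ hred, coeff_mul_X', if_neg]
      rw [Finsupp.mem_support_iff, not_not, he, if_neg (fun h : i = j => hij h)]
      omega
    · exact (ha j).coeff_eq_zero hdeg
  -- construction of b
  let c : (Fin (n + 1) →₀ ℕ) → k := fun ν =>
    if h : ∃ i, ν i + 2 ≤ t then coeff (ν + e h.choose) (a h.choose) else 0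
  let S : Finset (Fin (n + 1) →₀ ℕ) :=
    Finset.univ.biUnion fun i => (a i).support.image fun μ => μ - e i
  let b : MvPolynomial (Fin (n + 1)) k := ∑ ν ∈ S, monomial ν (c ν)
  have hbcoeff : ∀ ν, coeff ν b = c ν := by
    intro ν
    have h1 : coeff ν b = if ν ∈ S then c ν else 0 := by
      rw [coeff_sum]
      simp_rw [coeff_monomial]
      exact Finset.sum_ite_eq' S ν c
    rw [h1]
    split_ifs with hs
    · rfl
    · by_contra hne
      apply hs
      have hc : c ν ≠ 0 := fun h => hne h.symm
      simp only [c] at hc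
      split_ifs at hc with h
      · refine Finset.mem_biUnion.2 ⟨h.choose, Finset.mem_univ _, Finset.mem_image.2
          ⟨ν + e h.choose, mem_support_iff.2 hc, ?_⟩⟩
        exact add_tsub_cancel_right _ _
      · exact absurd rfl hc
  -- consistency
  have hcons : ∀ (i j : Fin (n + 1)) (ν : Fin (n + 1) →₀ ℕ), (∀ m, ν m < t) →
      ν i + 2 ≤ t → ν j + 2 ≤ t →
      coeff (ν + e i) (a i) = coeff (ν + e j) (a j) := by
    intro i j ν hν hi hj
    rcases eq_or_ne i j with rfl | hij
    · rfl
    · have hred : ∀ m, (ν + e i + e j) m < t := by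
        intro m
        rw [he j m (ν + e i), he i m ν]
        have hvm := hν m
        rcases eq_or_ne i m with rfl | h1
        · rw [if_pos rfl, if_neg (fun h : j = i => hij h.symm)]; omega
        · rw [if_neg h1]
          rcases eq_or_ne j m with rfl | h2
          · rw [if_pos rfl]; omega
          · rw [if_neg h2]; omega
      calc coeff (ν + e i) (a i) = coeff (ν + e i + e j) (a i * X j) :=
            (coeff_mul_X _ _ _).symm
        _ = coeff (ν + e i + e j) (a j * X i) := stepA i j _ hred
        _ = coeff (ν + e j + e i) (a j * X i) := by rw [add_right_comm]
        _ = coeff (ν + e j) (a j) := coeff_mul_X _ _ _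
  -- conclusion
  refine ⟨b, fun j => ?_⟩
  rw [hQ, memQ_iff]
  intro μ hμ
  rw [coeff_sub, sub_eq_zero]
  by_cases hj : μ j = 0
  · rw [step1 j μ hμ hj, coeff_mul_X', if_neg]
    simp [Finsupp.mem_support_iff, hj]
  · have hjle : e j ≤ μ := Finsupp.single_le_iff.2 (by omega)
    set ν := μ - e j with hν
    have hμν : ν + e j = μ := tsub_add_cancel_of_le hjle
    have hνapp : ∀ m, ν m = μ m - (if j = m then 1 else 0) := by
      intro m
      simp [hν, e, Finsupp.tsub_apply, Finsupp.single_apply]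
    have hνred : ∀ m, ν m < t := fun m => by
      rw [hνapp m]
      have := hμ m
      omega
    have hνj : ν j + 2 ≤ t := by
      rw [hνapp j, if_pos rfl]
      have := hμ j
      omega
    have hRHS : coeff μ (b * X j) = c ν := by
      rw [coeff_mul_X', if_pos (Finsupp.mem_support_iff.2 hj), ← hν, hbcoeff]
    rw [hRHS]
    have hex : ∃ i, ν i + 2 ≤ t := ⟨j, hνj⟩
    have hc : c ν = coeff (ν + e hex.choose) (a hex.choose) := by
      simp only [c, dif_pos hex]
    rw [hc, hcons hex.choose j ν hνred hex.choose_spec hνj, hμν]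
end
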